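/- arXiv:1601.07210 — 5 statements merged into one kernel-verified Lean document; each statement's English description precedes it below -/
import Mathlib

section
/- Let A ∈ ℂ^{n×t} with n ≤ t and let D ∈ ℂ^{n×t} be a diagonal matrix with diagonal entries d₁,…,dₙ, all nonzero, such that the squares d_i² are pairwise distinct. If both A Dᵀ and Dᵀ A are symmetric matrices, then A is diagonal. -/
open Matrix

/-- Let `A ∈ ℂ^{n×t}` with `n ≤ t`, and let `D ∈ ℂ^{n×t}` be diagonal with nonzero diagonal
entries `d i` whose squares are pairwise distinct. If `A Dᵀ` and `Dᵀ A` are both symmetric,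
then `A` is diagonal. -/
theorem stmt3 {n t : ℕ} (hnt : n ≤ t) (A D : Matrix (Fin n) (Fin t) ℂ) (d : Fin n → ℂ)
    (hD : ∀ (i : Fin n) (j : Fin t), D i j = if (j : ℕ) = (i : ℕ) then d i else 0)
    (hd0 : ∀ i, d i ≠ 0)
    (hd2 : ∀ i j, d i ^ 2 = d j ^ 2 → i = j)
    (h1 : (A * Dᵀ)ᵀ = A * Dᵀ)
    (h2 : (Dᵀ * A)ᵀ = Dᵀ * A) :
    ∀ (i : Fin n) (j : Fin t), (i : ℕ) ≠ (j : ℕ) → A i j = 0 := by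
  have key1 : ∀ a b : Fin n, (A * Dᵀ) a b = A a (Fin.castLE hnt b) * d b := by
    intro a b
    rw [mul_apply, Finset.sum_eq_single (Fin.castLE hnt b)]
    · simp [transpose_apply, hD]
    · intro c _ hc
      have : (c : ℕ) ≠ (b : ℕ) := fun h => hc (Fin.ext h)
      simp [transpose_apply, hD, this]
    · simp
  have key2 : ∀ (b : Fin n) (l : Fin t), (Dᵀ * A) (Fin.castLE hnt b) l = d b * A b l := by
    intro b l
    rw [mul_apply, Finset.sum_eq_single b]
    · simp [transpose_apply, hD]
    · intro c _ hc
      simp only [transpose_apply, hD, Fin.coe_castLE]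
      rw [if_neg (fun h => hc (Fin.ext h).symm), zero_mul]
    · simp
  have key3 : ∀ (j : Fin t), n ≤ (j : ℕ) → ∀ l, (Dᵀ * A) j l = 0 := by
    intro j hj l
    rw [mul_apply]
    apply Finset.sum_eq_zero
    intro c _
    have hc : (j : ℕ) ≠ (c : ℕ) := by have := c.2; omega
    simp only [transpose_apply, hD]
    rw [if_neg hc, zero_mul]
  intro i j hij
  by_cases hjn : (j : ℕ) < n
  · set j' : Fin n := ⟨j, hjn⟩ with hj'
    have hcast : Fin.castLE hnt j' = j := Fin.ext rfl
    have e1 : A i j * d j' = A j' (Fin.castLE hnt i) * d i := by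
      have := congrFun (congrFun h1 i) j'
      rw [transpose_apply, key1, key1, hcast] at this
      exact this.symm
    have e2 : d i * A i j = d j' * A j' (Fin.castLE hnt i) := by
      have := congrFun (congrFun h2 (Fin.castLE hnt i)) j
      rw [transpose_apply, ← hcast, key2, key2] at this
      exact this.symm
    set x := A i j
    set y := A j' (Fin.castLE hnt i)
    have hne : i ≠ j' := by
      intro h; apply hij; rw [h]
    have hd2' : d i ^ 2 ≠ d j' ^ 2 := fun h => hne (hd2 _ _ h)
    have hy : y = 0 := by
      by_contra hy0
      apply hd2'
      have c1 : d i * (x * d j') = d i * (y * d i) := by rw [e1]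
      have c2 : d j' * (d i * x) = d j' * (d j' * y) := by rw [e2]
      have : y * d i ^ 2 = y * d j' ^ 2 := by linear_combination c2 - c1
      exact mul_left_cancel₀ hy0 this
    have : x * d j' = 0 := by rw [e1, hy, zero_mul]
    exact (mul_eq_zero.mp this).resolve_right (hd0 j')
  · have := congrFun (congrFun h2 (Fin.castLE hnt i)) j
    rw [transpose_apply, key2, key3 j (le_of_not_gt hjn)] at this
    exact (mul_eq_zero.mp this.symm).resolve_left (hd0 i)
end

section
/- If A ∈ ℂ^{n×t} (n ≤ t) is such that the eigenvalues of A Aᵀ are nonzero and pairwise distinct, then A admits an algebraic SVD, i.e. A = U D Vᵀ for some U ∈ O_ℂ(n), V ∈ O_ℂ(t) and diagonal D ∈ ℂ^{n×t}. -/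
open Matrix Polynomial

/-!
Over `ℂ` the bilinear form `x ⬝ᵥ y` plays the role of the Hermitian inner product. Eigenvectors
of the symmetric matrix `A Aᵀ` for distinct eigenvalues are orthogonal for it, and since they form
a basis none of them is isotropic; rescaled, they give `W ∈ O_ℂ(n)` with `W A Aᵀ Wᵀ = diag μ`.
Taking `σᵢ² = μᵢ ≠ 0`, the rows of `diag(σ)⁻¹ W A` are orthonormal in `ℂ^t`. Such a family extends
to the rows of a matrix in `O_ℂ(t)`: while it is not complete, its orthogonal complement is a
nondegenerate subspace, so it contains a non-isotropic vector.
-/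

namespace Matrix

variable {K : Type*} [Field K] {m n p : Type*} [Fintype m] [Fintype n] [Fintype p]

lemma exists_injective_mem_roots_charpoly [DecidableEq n] [IsAlgClosed K] {B : Matrix n n K}
    (hroots : B.charpoly.roots.Nodup) :
    ∃ μ : n → K, Function.Injective μ ∧ ∀ i, μ i ∈ B.charpoly.roots := by
  classical
  have hcard : Fintype.card n = Fintype.card B.charpoly.roots.toFinset := by
    rw [Fintype.card_coe, Multiset.toFinset_card_of_nodup hroots,
      IsAlgClosed.card_roots_eq_natDegree, charpoly_natDegree_eq_dim]
  let e := Fintype.equivOfCardEq hcard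
  exact ⟨fun i => e i, Subtype.val_injective.comp e.injective,
    fun i => Multiset.mem_toFinset.mp (e i).2⟩

theorem exists_isUnit_det_mul_eq_diagonal_mul [DecidableEq n] [IsAlgClosed K] {B : Matrix n n K}
    (hroots : B.charpoly.roots.Nodup) :
    ∃ (μ : n → K) (P : Matrix n n K), Function.Injective μ ∧ (∀ i, μ i ∈ B.charpoly.roots) ∧
      IsUnit P.det ∧ P * B = diagonal μ * P := by
  obtain ⟨μ, hμ, hμroots⟩ := exists_injective_mem_roots_charpoly hroots
  have hev (i : n) : Module.End.HasEigenvalue Bᵀ.mulVecLin (μ i) := by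
    rw [Module.End.hasEigenvalue_iff_isRoot_charpoly, charpoly_mulVecLin, charpoly_transpose]
    exact isRoot_of_mem_roots (hμroots i)
  choose u hu using fun i => (hev i).exists_hasEigenvector
  have hP : IsUnit (of u) := linearIndependent_rows_iff_isUnit.mp <|
    Module.End.eigenvectors_linearIndependent' _ μ hμ u hu
  refine ⟨μ, of u, hμ, hμroots, (isUnit_iff_isUnit_det _).mp hP, ?_⟩
  ext i j
  rw [mul_apply_eq_vecMul, ← mulVec_transpose, diagonal_mul]
  exact congrFun (hu i).apply_eq_smul j

lemma dotProduct_eq_zero_of_mulVec_eq_smul {R : Type*} [CommRing R] [IsDomain R]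
    {B : Matrix n n R} (hB : Bᵀ = B) {x y : n → R} {a b : R}
    (hx : B *ᵥ x = a • x) (hy : B *ᵥ y = b • y) (hab : a ≠ b) : x ⬝ᵥ y = 0 := by
  have h : a * (x ⬝ᵥ y) = b * (x ⬝ᵥ y) :=
    calc a * (x ⬝ᵥ y) = (B *ᵥ x) ⬝ᵥ y := by rw [hx, smul_dotProduct, smul_eq_mul]
      _ = x ⬝ᵥ (B *ᵥ y) := by
        rw [dotProduct_comm, dotProduct_mulVec, ← mulVec_transpose, hB, dotProduct_comm]
      _ = b * (x ⬝ᵥ y) := by rw [hy, dotProduct_smul, smul_eq_mul]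
  exact (mul_eq_mul_right_iff.mp h).resolve_left hab

lemma mul_transpose_eq_diagonal_of_mul_eq_diagonal_mul {R : Type*} [CommRing R] [IsDomain R]
    [DecidableEq n] {B P : Matrix n n R} (hB : Bᵀ = B) {μ : n → R} (hμ : Function.Injective μ)
    (hP : P * B = diagonal μ * P) : P * Pᵀ = diagonal fun i => P i ⬝ᵥ P i := by
  have hrow (i : n) : B *ᵥ P i = μ i • P i := by
    ext j
    rw [← hB, mulVec_transpose, ← mul_apply_eq_vecMul, hP, diagonal_mul]
    rfl
  ext i j
  rw [mul_apply', diagonal_apply]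
  split_ifs with hij
  · subst hij; rfl
  · exact dotProduct_eq_zero_of_mulVec_eq_smul hB (hrow i) (hrow j) (hμ.ne hij)

lemma diagonal_mul_mul_transpose_eq_one {R : Type*} [CommRing R] [DecidableEq m]
    {N : Matrix m p R} {c d : m → R} (hN : N * Nᵀ = diagonal d) (hcd : ∀ i, c i ^ 2 * d i = 1) :
    diagonal c * N * (diagonal c * N)ᵀ = 1 := by
  rw [transpose_mul, diagonal_transpose, Matrix.mul_assoc, ← Matrix.mul_assoc N, hN,
    diagonal_mul_diagonal, diagonal_mul_diagonal, ← diagonal_one]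
  congr 1
  ext i
  rw [← hcd i]
  ring

theorem exists_mul_transpose_eq_one_and_mul_eq_diagonal_mul [DecidableEq n] [IsAlgClosed K]
    {B : Matrix n n K} (hB : Bᵀ = B) (hroots : B.charpoly.roots.Nodup) :
    ∃ (μ : n → K) (W : Matrix n n K), (∀ i, μ i ∈ B.charpoly.roots) ∧
      W * Wᵀ = 1 ∧ W * B = diagonal μ * W := by
  obtain ⟨μ, P, hμ, hμroots, hP, hPB⟩ := exists_isUnit_det_mul_eq_diagonal_mul hroots
  have hPP := mul_transpose_eq_diagonal_of_mul_eq_diagonal_mul hB hμ hPB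
  have hself (i : n) : P i ⬝ᵥ P i ≠ 0 := by
    have hdet : (P * Pᵀ).det ≠ 0 := by
      rw [det_mul, det_transpose]
      exact mul_ne_zero hP.ne_zero hP.ne_zero
    rw [hPP, det_diagonal] at hdet
    exact Finset.prod_ne_zero_iff.mp hdet i (Finset.mem_univ i)
  choose c hc using fun i => IsAlgClosed.exists_pow_nat_eq (P i ⬝ᵥ P i)⁻¹ two_pos
  refine ⟨μ, diagonal c * P, hμroots,
    diagonal_mul_mul_transpose_eq_one hPP fun i => by rw [hc, inv_mul_cancel₀ (hself i)], ?_⟩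
  rw [Matrix.mul_assoc, hPB, ← Matrix.mul_assoc, ← Matrix.mul_assoc, diagonal_mul_diagonal,
    diagonal_mul_diagonal, funext fun i => mul_comm (c i) (μ i)]

lemma exists_mulVec_eq_zero_dotProduct_self_ne_zero [DecidableEq m] [DecidableEq p]
    [NeZero (2 : K)] {M : Matrix m p K} (hM : M * Mᵀ = 1) {x : p → K} (hx : x ≠ 0)
    (hMx : M *ᵥ x = 0) : ∃ z : p → K, M *ᵥ z = 0 ∧ z ⬝ᵥ z ≠ 0 := by
  obtain ⟨j, hj⟩ := Function.ne_iff.mp hx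
  -- the projection of the basis vector `e_j` onto `ker M`; it pairs with `x` to `x j ≠ 0`
  set k : p → K := Pi.single j 1 - Mᵀ *ᵥ (M *ᵥ Pi.single j 1)
  have hMk : M *ᵥ k = 0 := by
    rw [mulVec_sub, mulVec_mulVec, hM, one_mulVec, sub_self]
  have hxk : x ⬝ᵥ k = x j := by
    rw [dotProduct_sub, dotProduct_mulVec, vecMul_transpose, hMx, zero_dotProduct, sub_zero,
      dotProduct_single, mul_one]
  by_cases hxx : x ⬝ᵥ x = 0
  · by_cases hkk : k ⬝ᵥ k = 0
    · refine ⟨x + k, by rw [mulVec_add, hMx, hMk, add_zero], ?_⟩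
      rw [dotProduct_add, add_dotProduct, add_dotProduct, hxx, hkk, dotProduct_comm k, hxk]
      convert mul_ne_zero (two_ne_zero (α := K)) hj using 1
      ring
    · exact ⟨k, hMk, hkk⟩
  · exact ⟨x, hMx, hxx⟩

lemma exists_mulVec_eq_zero_dotProduct_self_eq_one [DecidableEq m] [DecidableEq p]
    [IsAlgClosed K] [NeZero (2 : K)] {M : Matrix m p K} (hM : M * Mᵀ = 1)
    (hcard : Fintype.card m < Fintype.card p) : ∃ w : p → K, M *ᵥ w = 0 ∧ w ⬝ᵥ w = 1 := by
  have hker : LinearMap.ker M.mulVecLin ≠ ⊥ :=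
    LinearMap.ker_ne_bot_of_finrank_lt (by simpa using hcard)
  obtain ⟨x, hx, hx0⟩ := Submodule.exists_mem_ne_zero_of_ne_bot hker
  obtain ⟨z, hMz, hzz⟩ := exists_mulVec_eq_zero_dotProduct_self_ne_zero hM hx0 hx
  obtain ⟨c, hc⟩ := IsAlgClosed.exists_pow_nat_eq (z ⬝ᵥ z)⁻¹ two_pos
  refine ⟨c • z, by rw [mulVec_smul, hMz, smul_zero], ?_⟩
  rw [smul_dotProduct, dotProduct_smul, smul_smul, smul_eq_mul, ← sq, hc, inv_mul_cancel₀ hzz]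

lemma snoc_mul_transpose_snoc_eq_one {R : Type*} [CommRing R] {k : ℕ} {M : Matrix (Fin k) p R}
    (hM : M * Mᵀ = 1) {w : p → R} (hMw : M *ᵥ w = 0) (hw : w ⬝ᵥ w = 1) :
    of (Fin.snoc M.row w) * (of (Fin.snoc M.row w))ᵀ = 1 := by
  have hMw' (i : Fin k) : M i ⬝ᵥ w = 0 := congrFun hMw i
  ext i j
  change Fin.snoc (α := fun _ => p → R) M.row w i ⬝ᵥ Fin.snoc (α := fun _ => p → R) M.row w j =
    (1 : Matrix (Fin (k + 1)) (Fin (k + 1)) R) i j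
  induction i using Fin.lastCases <;> induction j using Fin.lastCases <;>
    simp only [Fin.snoc_last, Fin.snoc_castSucc, row_apply']
  · simp [hw]
  · simp [dotProduct_comm w, hMw', (Fin.castSucc_lt_last _).ne']
  · simp [hMw', (Fin.castSucc_lt_last _).ne]
  · rename_i i j
    simpa [mul_apply', one_apply] using congrFun (congrFun hM i) j

theorem exists_mul_transpose_eq_one_submatrix_castLE [IsAlgClosed K] [NeZero (2 : K)]
    {k t : ℕ} (hkt : k ≤ t) (M : Matrix (Fin k) (Fin t) K) (hM : M * Mᵀ = 1) :
    ∃ V : Matrix (Fin t) (Fin t) K, V * Vᵀ = 1 ∧ V.submatrix (Fin.castLE hkt) id = M := by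
  induction hkt using Nat.decreasingInduction with
  | self => exact ⟨M, hM, by ext; rfl⟩
  | of_succ k hkt ih =>
    obtain ⟨w, hMw, hw⟩ := exists_mulVec_eq_zero_dotProduct_self_eq_one hM (by simpa using hkt)
    obtain ⟨V, hV, hVM⟩ := ih _ (snoc_mul_transpose_snoc_eq_one hM hMw hw)
    refine ⟨V, hV, ?_⟩
    ext i j
    simpa using congrFun (congrFun hVM i.castSucc) j

end Matrix

/-- If the eigenvalues of `A Aᵀ` (the roots of its characteristic polynomial) are nonzero and
pairwise distinct, then `A ∈ ℂ^{n×t}` (`n ≤ t`) admits an algebraic SVD `A = U D Vᵀ` with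
`U ∈ O_ℂ(n)`, `V ∈ O_ℂ(t)` and `D` diagonal. -/
theorem stmt6 {n t : ℕ} (hnt : n ≤ t) (A : Matrix (Fin n) (Fin t) ℂ)
    (hnz : ∀ μ ∈ (A * Aᵀ).charpoly.roots, μ ≠ 0)
    (hdis : (A * Aᵀ).charpoly.roots.Nodup) :
    ∃ (U : Matrix (Fin n) (Fin n) ℂ) (V : Matrix (Fin t) (Fin t) ℂ)
      (D : Matrix (Fin n) (Fin t) ℂ), U * Uᵀ = 1 ∧ V * Vᵀ = 1 ∧
      (∀ (i : Fin n) (j : Fin t), (i : ℕ) ≠ (j : ℕ) → D i j = 0) ∧ A = U * D * Vᵀ := by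
  have hsymm : (A * Aᵀ)ᵀ = A * Aᵀ := by rw [transpose_mul, transpose_transpose]
  obtain ⟨μ, W, hμ, hW, hWA⟩ := exists_mul_transpose_eq_one_and_mul_eq_diagonal_mul hsymm hdis
  choose σ hσ using fun i => IsAlgClosed.exists_pow_nat_eq (μ i) two_pos
  have hσ0 (i : Fin n) : σ i ≠ 0 := fun h => hnz _ (hμ i) (by rw [← hσ i, h, zero_pow two_ne_zero])
  have hWAWA : W * A * (W * A)ᵀ = diagonal μ := by
    rw [transpose_mul, Matrix.mul_assoc, ← Matrix.mul_assoc A, ← Matrix.mul_assoc, hWA,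
      Matrix.mul_assoc, hW, Matrix.mul_one]
  have hM := diagonal_mul_mul_transpose_eq_one (c := σ⁻¹) hWAWA fun i => by
    rw [Pi.inv_apply, inv_pow, hσ, inv_mul_cancel₀ (hσ i ▸ pow_ne_zero 2 (hσ0 i))]
  obtain ⟨V, hV, hVM⟩ := exists_mul_transpose_eq_one_submatrix_castLE hnt _ hM
  refine ⟨Wᵀ, Vᵀ, diagonal σ * (1 : Matrix (Fin t) (Fin t) ℂ).submatrix (Fin.castLE hnt) id,
    by rw [transpose_transpose]; exact mul_eq_one_comm.mp hW,
    by rw [transpose_transpose]; exact mul_eq_one_comm.mp hV, fun i j hij => ?_, ?_⟩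
  · simp [diagonal_mul, one_apply, Fin.ext_iff, hij]
  · have hD : (1 : Matrix (Fin t) (Fin t) ℂ).submatrix (Fin.castLE hnt) id * V =
        V.submatrix (Fin.castLE hnt) id := one_submatrix_mul _ (Equiv.refl _) V
    rw [transpose_transpose, Matrix.mul_assoc, Matrix.mul_assoc, hD, hVM,
      ← Matrix.mul_assoc (diagonal σ), diagonal_mul_diagonal]
    simp [hσ0, ← Matrix.mul_assoc, mul_eq_one_comm.mp hW]
end

section
/- Fix n ≥ 1 and let H_n⁺ = { x ∈ ℂⁿ : x₁ x₂ ⋯ xₙ = 1 }. The system of polynomial equations x_i(x_i - 0) = x_n(x_n - 0) for i = 1,…,n-1 together with x₁⋯xₙ = 1 (i.e. x₁² = x₂² = ⋯ = xₙ² and x₁⋯xₙ = 1) has exactly n·2^{n-1} solutions in ℂⁿ. -/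
/-!
Every solution has a nonzero first coordinate `t`, and `xᵢ² = t²` forces `xᵢ = ±t`, so a solution
is `t • (1, ε₁, …, εₘ)` for a unique sign vector `ε ∈ {±1}ᵐ` (here `n = m + 1`). Since the signs
square to `1`, the product condition becomes `tⁿ = ε₁ ⋯ εₘ`, which has exactly `n` solutions `t`
for each of the `2ᵐ` sign vectors.
-/

open Finset

theorem IsPrimitiveRoot.card_pow_eq {R : Type*} [CommRing R] [IsDomain R] {ζ : R} {n : ℕ}
    [NeZero n] (hζ : IsPrimitiveRoot ζ n) {a : R} (ha : a ≠ 0) (hroot : ∃ α, α ^ n = a) :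
    Nat.card {t : R // t ^ n = a} = n := by
  classical
  rw [Nat.card_congr <| Equiv.subtypeEquivRight fun t =>
      (Polynomial.mem_nthRootsFinset n.pos_of_neZero a).symm,
    Nat.card_eq_finsetCard, Polynomial.nthRootsFinset_def,
    Multiset.toFinset_card_of_nodup (hζ.nthRoots_nodup ha), hζ.card_nthRoots, if_pos hroot]

theorem exists_int_unit_mul_eq_of_sq_eq {R : Type*} [CommRing R] [NoZeroDivisors R] {a b : R}
    (h : a ^ 2 = b ^ 2) : ∃ u : ℤˣ, a = (u : ℤ) * b := by
  rcases sq_eq_sq_iff_eq_or_eq_neg.mp h with rfl | rfl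
  · exact ⟨1, by simp⟩
  · exact ⟨-1, by simp⟩

theorem Int.cast_units_injective {R : Type*} [Ring R] [NeZero (2 : R)] :
    Function.Injective fun u : ℤˣ => ((u : ℤ) : R) := by
  have h : (1 : R) ≠ -1 := fun h => two_ne_zero (α := R) <| by
    rw [← one_add_one_eq_two]; nth_rewrite 2 [h]; exact add_neg_cancel 1
  intro u v huv
  rcases Int.units_eq_one_or u with rfl | rfl <;> rcases Int.units_eq_one_or v with rfl | rfl
  · rfl
  · exact absurd (by simpa using huv) h
  · exact absurd (by simpa using huv.symm) h
  · rfl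

theorem Int.cast_units_mul_self {R : Type*} [Ring R] (u : ℤˣ) : ((u : ℤ) : R) * (u : ℤ) = 1 := by
  rw [← Int.cast_mul, ← Units.val_mul, Int.units_mul_self, Units.val_one, Int.cast_one]

theorem Int.cast_units_ne_zero {R : Type*} [Ring R] [Nontrivial R] (u : ℤˣ) : ((u : ℤ) : R) ≠ 0 :=
  left_ne_zero_of_mul_eq_one (Int.cast_units_mul_self u)

variable {K : Type*} [Field K] {m : ℕ}

def edCriticalPointsAtZero (K : Type*) [Field K] (n : ℕ) : Set (Fin n → K) :=
  {x | (∀ i j, x i ^ 2 = x j ^ 2) ∧ ∏ i, x i = 1}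

def signedScaling (s : Fin m → ℤˣ) (t : K) : Fin (m + 1) → K :=
  Fin.cons t fun i => ((s i : ℤ) : K) * t

theorem prod_signedScaling (s : Fin m → ℤˣ) (t : K) :
    ∏ i, signedScaling s t i = t ^ (m + 1) * ((∏ i, s i : ℤˣ) : ℤ) := by
  simp only [signedScaling, Fin.prod_cons, prod_mul_distrib, prod_const, card_univ,
    Fintype.card_fin, Units.coe_prod, Int.cast_prod]
  ring

theorem signedScaling_mem {s : Fin m → ℤˣ} {t : K} (ht : t ^ (m + 1) = ((∏ i, s i : ℤˣ) : ℤ)) :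
    signedScaling s t ∈ edCriticalPointsAtZero K (m + 1) := by
  have hsq : ∀ i, signedScaling s t i ^ 2 = t ^ 2 := by
    refine Fin.cases rfl fun i => ?_
    simp [signedScaling, mul_pow, ← Int.cast_pow, ← Units.val_pow_eq_pow_val, Int.units_sq]
  refine ⟨fun i j => by rw [hsq, hsq], ?_⟩
  rw [prod_signedScaling, ht, Int.cast_units_mul_self]

theorem exists_signedScaling_eq {x : Fin (m + 1) → K} (hx : x ∈ edCriticalPointsAtZero K (m + 1)) :
    ∃ s, signedScaling s (x 0) = x := by
  choose s hs using fun i : Fin m => exists_int_unit_mul_eq_of_sq_eq (hx.1 i.succ 0)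
  exact ⟨s, funext <| Fin.cases rfl fun i => (hs i).symm⟩

theorem signedScaling_injective [NeZero (2 : K)] {s s' : Fin m → ℤˣ} {t t' : K} (ht : t ≠ 0)
    (h : signedScaling s t = signedScaling s' t') : s = s' ∧ t = t' := by
  obtain rfl : t = t' := congr_fun h 0
  refine ⟨funext fun i => Int.cast_units_injective (R := K) ?_, rfl⟩
  exact mul_right_cancel₀ ht (congr_fun h i.succ)

abbrev SignedRoots (K : Type*) [Field K] (m : ℕ) : Type _ :=
  Σ s : Fin m → ℤˣ, {t : K // t ^ (m + 1) = ((∏ i, s i : ℤˣ) : ℤ)}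

def SignedRoots.toEdCriticalPoint (p : SignedRoots K m) : edCriticalPointsAtZero K (m + 1) :=
  ⟨signedScaling p.1 p.2, signedScaling_mem p.2.2⟩

theorem SignedRoots.toEdCriticalPoint_bijective [NeZero (2 : K)] :
    Function.Bijective (SignedRoots.toEdCriticalPoint (K := K) (m := m)) := by
  constructor
  · rintro ⟨s, t, ht⟩ ⟨s', t', ht'⟩ h
    have ht0 : t ≠ 0 := ne_zero_pow m.succ_ne_zero (ht ▸ Int.cast_units_ne_zero _)
    obtain ⟨rfl, rfl⟩ := signedScaling_injective ht0 (congrArg Subtype.val h)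
    rfl
  · rintro ⟨x, hx⟩
    obtain ⟨s, hs⟩ := exists_signedScaling_eq hx
    refine ⟨⟨s, x 0, ?_⟩, Subtype.ext hs⟩
    calc x 0 ^ (m + 1) = x 0 ^ (m + 1) * ((∏ i, s i : ℤˣ) : ℤ) * ((∏ i, s i : ℤˣ) : ℤ) := by
          rw [mul_assoc, Int.cast_units_mul_self, mul_one]
      _ = ((∏ i, s i : ℤˣ) : ℤ) := by rw [← prod_signedScaling, hs, hx.2, one_mul]

theorem ncard_edCriticalPointsAtZero [IsAlgClosed K] [NeZero (2 : K)] {ζ : K}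
    (hζ : IsPrimitiveRoot ζ (m + 1)) :
    (edCriticalPointsAtZero K (m + 1)).ncard = (m + 1) * 2 ^ m := by
  have hfiber (s : Fin m → ℤˣ) :
      Nat.card {t : K // t ^ (m + 1) = ((∏ i, s i : ℤˣ) : ℤ)} = m + 1 :=
    hζ.card_pow_eq (Int.cast_units_ne_zero _) (IsAlgClosed.exists_pow_nat_eq _ m.succ_pos)
  have (s : Fin m → ℤˣ) : Finite {t : K // t ^ (m + 1) = ((∏ i, s i : ℤˣ) : ℤ)} :=
    Nat.finite_of_card_ne_zero (by rw [hfiber]; exact m.succ_ne_zero)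
  rw [← Nat.card_coe_set_eq, ← Nat.card_eq_of_bijective _ SignedRoots.toEdCriticalPoint_bijective,
    Nat.card_sigma]
  simp only [hfiber, sum_const, card_univ, Fintype.card_fun, Fintype.card_units_int,
    Fintype.card_fin, smul_eq_mul, mul_comm]

/-- For `n ≥ 1`, the ED critical point system for the data point `y = 0` on the hypersurface
`x₁ ⋯ xₙ = 1`, namely `x₁² = x₂² = ⋯ = xₙ²` together with `x₁ ⋯ xₙ = 1`, has exactly
`n · 2^{n-1}` solutions in `ℂⁿ`. -/
theorem stmt13 {n : ℕ} (hn : 1 ≤ n) :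
    Set.ncard {x : Fin n → ℂ | (∀ i j : Fin n, x i ^ 2 = x j ^ 2) ∧ ∏ i, x i = 1} =
      n * 2 ^ (n - 1) := by
  obtain ⟨m, rfl⟩ := Nat.exists_eq_add_of_le' hn
  exact ncard_edCriticalPointsAtZero (Complex.isPrimitiveRoot_exp (m + 1) m.succ_ne_zero)
end

section
/- Let X ∈ ℂ^{n×t} (n ≤ t) be in the Zariski closure of the set { U Diag(x) Vᵀ : U ∈ O_ℂ(n), V ∈ O_ℂ(t), x ∈ S_ℂ } where S_ℂ ⊆ ℂⁿ is a Zariski-closed set invariant under signed permutations. If X_k = U_k Diag(x^k) V_kᵀ is a sequence with U_k ∈ O_ℂ(n), V_k ∈ O_ℂ(t), x^k ∈ S_ℂ converging to X in the Euclidean topology, then any vector x of square roots of the eigenvalues of X Xᵀ lies in S_ℂ. -/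
/-!
The Gram matrices `X_k X_kᵀ = U_k Diag((x^k)²) U_kᵀ` have characteristic polynomial
`∏ (T - (x^k_i)²)` and converge to `X Xᵀ`. By Gershgorin's theorem the eigenvalues `(x^k_i)²` of
a convergent sequence of matrices stay bounded, so a subsequence of `x^k` converges to some
`y ∈ S`, and passing to the limit in `det (z - X_k X_kᵀ)` gives `charpoly (X Xᵀ) = ∏ (T - y_i²)`.
Comparing roots, `x_i² = y_{σ i}²` for a permutation `σ`, so `x` is a signed permutation of `y`.
-/

open Matrix Polynomial Filter Topology

/-- `Diag x ∈ ℂ^{n×t}`. -/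
def diagRectC (n t : ℕ) (x : Fin n → ℂ) : Matrix (Fin n) (Fin t) ℂ :=
  fun i j => if (j : ℕ) = (i : ℕ) then x i else 0

theorem Equiv.Perm.exists_comp_eq_of_map_univ_eq {ι α : Type*} [Fintype ι] {f g : ι → α}
    (h : Finset.univ.val.map f = Finset.univ.val.map g) :
    ∃ σ : Equiv.Perm ι, ∀ i, f (σ i) = g i := by
  classical
  have hcard : ∀ a, Fintype.card {i // g i = a} = Fintype.card {i // f i = a} := fun a => by
    simpa only [Multiset.count_map, Fintype.card_subtype, Finset.card_def, Finset.filter_val,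
      eq_comm] using congrArg (Multiset.count a) h.symm
  exact ⟨Equiv.ofFiberEquiv fun a => Fintype.equivOfCardEq (hcard a), Equiv.ofFiberEquiv_map _⟩

theorem Polynomial.roots_prod_X_sub_C_apply {ι R : Type*} [Fintype ι] [CommRing R] [IsDomain R]
    (f : ι → R) : (∏ i, (X - C (f i))).roots = Finset.univ.val.map f := by
  simpa [Multiset.map_map] using roots_multiset_prod_X_sub_C (Finset.univ.val.map f)

theorem exists_signed_perm_of_prod_X_sub_C_sq_eq {ι R : Type*} [Fintype ι] [CommRing R]
    [IsDomain R] {x y : ι → R}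
    (h : ∏ i, (X - C (x i ^ 2)) = ∏ i, (X - C (y i ^ 2))) :
    ∃ σ : Equiv.Perm ι, ∃ ε : ι → R,
      (∀ i, ε i = 1 ∨ ε i = -1) ∧ x = fun i => ε i * y (σ i) := by
  have hroots := congrArg roots h
  simp only [roots_prod_X_sub_C_apply] at hroots
  obtain ⟨σ, hσ⟩ := Equiv.Perm.exists_comp_eq_of_map_univ_eq hroots.symm
  have hsign : ∀ i, ∃ e : R, (e = 1 ∨ e = -1) ∧ x i = e * y (σ i) := fun i => by
    rcases sq_eq_sq_iff_eq_or_eq_neg.mp (hσ i).symm with hi | hi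
    · exact ⟨1, .inl rfl, by rw [hi, one_mul]⟩
    · exact ⟨-1, .inr rfl, by rw [hi, neg_one_mul]⟩
  choose ε hε hx using hsign
  exact ⟨σ, ε, hε, funext hx⟩

theorem Matrix.norm_le_sum_norm_of_isRoot_charpoly {K ι : Type*} [NormedField K] [Fintype ι]
    [DecidableEq ι] {A : Matrix ι ι K} {μ : K} (hμ : A.charpoly.IsRoot μ) :
    ‖μ‖ ≤ ∑ i, ∑ j, ‖A i j‖ := by
  rw [← charpoly_toLin', ← Module.End.hasEigenvalue_iff_isRoot_charpoly] at hμ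
  obtain ⟨k, hk⟩ := eigenvalue_mem_ball hμ
  rw [mem_closedBall_iff_norm] at hk
  calc ‖μ‖ ≤ ‖A k k‖ + ‖μ - A k k‖ := norm_le_norm_add_norm_sub' μ (A k k)
    _ ≤ ∑ j, ‖A k j‖ := by
      rw [← Finset.add_sum_erase _ _ (Finset.mem_univ k)]; gcongr
    _ ≤ ∑ i, ∑ j, ‖A i j‖ :=
      Finset.single_le_sum (f := fun i => ∑ j, ‖A i j‖)
        (fun i _ => Finset.sum_nonneg fun j _ => norm_nonneg _) (Finset.mem_univ k)

theorem Matrix.continuous_eval_charpoly {R ι : Type*} [CommRing R] [TopologicalSpace R]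
    [IsTopologicalRing R] [Fintype ι] [DecidableEq ι] (z : R) :
    Continuous fun A : Matrix ι ι R => A.charpoly.eval z := by
  simp only [eval_charpoly]
  fun_prop

theorem Matrix.charpoly_mul_mul_transpose_of_mul_transpose_eq_one {R ι : Type*} [CommRing R]
    [Fintype ι] [DecidableEq ι] {U : Matrix ι ι R} (hU : U * Uᵀ = 1) (A : Matrix ι ι R) :
    (U * A * Uᵀ).charpoly = A.charpoly := by
  rw [charpoly_mul_comm, ← Matrix.mul_assoc, mul_eq_one_comm.mp hU, Matrix.one_mul]

theorem diagRectC_mul_transpose {n t : ℕ} (hnt : n ≤ t) (x : Fin n → ℂ) :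
    diagRectC n t x * (diagRectC n t x)ᵀ = diagonal fun i => x i ^ 2 := by
  ext i i'
  rw [mul_apply, Finset.sum_eq_single (Fin.castLE hnt i')]
  · rcases eq_or_ne i i' with rfl | h
    · simp [diagRectC, sq]
    · simp [diagRectC, Fin.val_eq_val, h, h.symm]
  · intro j _ hj
    have hji : (j : ℕ) ≠ i' := fun h => hj (Fin.ext h)
    simp only [transpose_apply, diagRectC, if_neg hji, mul_zero]
  · simp

theorem charpoly_svd_mul_transpose {n t : ℕ} (hnt : n ≤ t) {U : Matrix (Fin n) (Fin n) ℂ}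
    {V : Matrix (Fin t) (Fin t) ℂ} (hU : U * Uᵀ = 1) (hV : V * Vᵀ = 1) (x : Fin n → ℂ) :
    ((U * diagRectC n t x * Vᵀ) * (U * diagRectC n t x * Vᵀ)ᵀ).charpoly =
      ∏ i, (X - C (x i ^ 2)) := by
  have hgram : (U * diagRectC n t x * Vᵀ) * (U * diagRectC n t x * Vᵀ)ᵀ =
      U * (diagRectC n t x * (diagRectC n t x)ᵀ) * Uᵀ := by
    simp only [transpose_mul, transpose_transpose, Matrix.mul_assoc]
    rw [← Matrix.mul_assoc Vᵀ, mul_eq_one_comm.mp hV, Matrix.one_mul]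
  rw [hgram, charpoly_mul_mul_transpose_of_mul_transpose_eq_one hU, diagRectC_mul_transpose hnt,
    charpoly_diagonal]

theorem Matrix.charpoly_eq_prod_of_tendsto {R ι α : Type*} [Field R] [Infinite R]
    [TopologicalSpace R] [IsTopologicalRing R] [T2Space R] [Fintype ι] [DecidableEq ι]
    {l : Filter α} [l.NeBot] {A : α → Matrix ι ι R} {B : Matrix ι ι R}
    (hA : Tendsto A l (𝓝 B))
    {μ : α → ι → R} {ν : ι → R} (hμ : Tendsto μ l (𝓝 ν))
    (h : ∀ k, (A k).charpoly = ∏ i, (X - C (μ k i))) :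
    B.charpoly = ∏ i, (X - C (ν i)) := by
  refine Polynomial.funext fun z =>
    tendsto_nhds_unique (((continuous_eval_charpoly z).tendsto B).comp hA) ?_
  have hprod : Continuous fun w : ι → R => ∏ i, (z - w i) := by fun_prop
  simpa only [Function.comp_def, h, eval_prod, eval_sub, eval_X, eval_C]
    using (hprod.tendsto ν).comp hμ

theorem Matrix.exists_norm_le_of_tendsto_of_charpoly_eq_prod {K ι : Type*} [NormedField K]
    [Fintype ι] [DecidableEq ι] {A : ℕ → Matrix ι ι K} {B : Matrix ι ι K}
    (hA : Tendsto A atTop (𝓝 B)) {μ : ℕ → ι → K}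
    (h : ∀ k, (A k).charpoly = ∏ i, (X - C (μ k i))) :
    ∃ c, ∀ k i, ‖μ k i‖ ≤ c := by
  have hcont : Continuous fun M : Matrix ι ι K => ∑ i, ∑ j, ‖M i j‖ := by fun_prop
  obtain ⟨c, hc⟩ := ((hcont.tendsto B).comp hA).bddAbove_range
  refine ⟨c, fun k i => (norm_le_sum_norm_of_isRoot_charpoly ?_).trans (hc ⟨k, rfl⟩)⟩
  rw [h k, isRoot_prod]
  exact ⟨i, Finset.mem_univ i, root_X_sub_C.mpr rfl⟩

theorem exists_mem_charpoly_eq_prod_sq_of_tendsto {K ι : Type*} [NontriviallyNormedField K]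
    [ProperSpace K] [Fintype ι] [DecidableEq ι] {S : Set (ι → K)} (hS : IsClosed S)
    {A : ℕ → Matrix ι ι K} {B : Matrix ι ι K} (hA : Tendsto A atTop (𝓝 B)) {w : ℕ → ι → K}
    (hw : ∀ k, w k ∈ S) (h : ∀ k, (A k).charpoly = ∏ i, (X - C (w k i ^ 2))) :
    ∃ y ∈ S, B.charpoly = ∏ i, (X - C (y i ^ 2)) := by
  obtain ⟨c, hc⟩ := exists_norm_le_of_tendsto_of_charpoly_eq_prod hA h
  have hbdd : ∀ k, w k ∈ Metric.closedBall 0 √c := fun k => by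
    rw [mem_closedBall_zero_iff, pi_norm_le_iff_of_nonneg (Real.sqrt_nonneg c)]
    exact fun i => Real.le_sqrt_of_sq_le (norm_pow (w k i) 2 ▸ hc k i)
  obtain ⟨y, -, φ, hφ, hy⟩ := tendsto_subseq_of_bounded Metric.isBounded_closedBall hbdd
  exact ⟨y, hS.mem_of_tendsto hy (.of_forall fun k => hw (φ k)),
    charpoly_eq_prod_of_tendsto (hA.comp hφ.tendsto_atTop) (hy.pow 2) fun k => h (φ k)⟩

/-- Let `S_ℂ ⊆ ℂⁿ` be closed (in the Euclidean topology) and invariant under signed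
permutations. If a sequence `X_k = U_k Diag(x^k) V_kᵀ` with `U_k ∈ O_ℂ(n)`, `V_k ∈ O_ℂ(t)`,
`x^k ∈ S_ℂ` converges to `X` in the Euclidean topology, then any vector `x` of square roots
of the eigenvalues of `X Xᵀ` lies in `S_ℂ`. -/
theorem stmt15 {n t : ℕ} (hnt : n ≤ t) (S : Set (Fin n → ℂ))
    (hSclosed : IsClosed S)
    (hSinv : ∀ (σ : Equiv.Perm (Fin n)) (ε : Fin n → ℂ), (∀ i, ε i = 1 ∨ ε i = -1) →
      ∀ x ∈ S, (fun i => ε i * x (σ i)) ∈ S)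
    (X : Matrix (Fin n) (Fin t) ℂ)
    (U : ℕ → Matrix (Fin n) (Fin n) ℂ) (V : ℕ → Matrix (Fin t) (Fin t) ℂ)
    (xseq : ℕ → Fin n → ℂ)
    (hU : ∀ k, U k * (U k)ᵀ = 1) (hV : ∀ k, V k * (V k)ᵀ = 1)
    (hx : ∀ k, xseq k ∈ S)
    (hconv : Tendsto (fun k => U k * diagRectC n t (xseq k) * (V k)ᵀ) atTop (nhds X))
    (x : Fin n → ℂ)
    (hroots : (X * Xᵀ).charpoly = ∏ i : Fin n, (Polynomial.X - C (x i ^ 2))) :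
    x ∈ S := by
  have hgram : Continuous fun M : Matrix (Fin n) (Fin t) ℂ => M * Mᵀ := by fun_prop
  obtain ⟨y, hyS, hy⟩ := exists_mem_charpoly_eq_prod_sq_of_tendsto hSclosed
    ((hgram.tendsto X).comp hconv) hx fun k => charpoly_svd_mul_transpose hnt (hU k) (hV k) _
  obtain ⟨σ, ε, hε, rfl⟩ := exists_signed_perm_of_prod_X_sub_C_sq_eq (hroots.symm.trans hy)
  exact hSinv σ ε hε y hyS
end

section
/- Let Y = U D Vᵀ with U ∈ O_ℂ(n), V ∈ O_ℂ(t), D ∈ ℂ^{n×t} diagonal with nonzero diagonal entries d_i whose squares are pairwise distinct. Suppose A ∈ ℂ^{n×t} satisfies: trace((D - A) Aᵀ Zᵀ) = 0 for every skew-symmetric Z ∈ ℂ^{n×n}, and trace((D - A)ᵀ A Zᵀ) = 0 for every skew-symmetric Z ∈ ℂ^{t×t}. Then A is a diagonal matrix. -/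
/-!
Testing the trace conditions against the skew matrices `E_qp - E_pq` shows that `(D - A) Aᵀ`
and `(D - A)ᵀ A` are symmetric; as `A Aᵀ` and `Aᵀ A` are symmetric, so are `D Aᵀ` and `Dᵀ A`.
For `k < n`, `k ≠ i`, these two symmetries read `dᵢ Aᵢₖ = dₖ Aₖᵢ` and `dₖ Aᵢₖ = dᵢ Aₖᵢ`, whence
`(dᵢ² - dₖ²) Aᵢₖ = 0`; for a column `k ≥ n`, where `D` vanishes, symmetry of `Dᵀ A` gives
`dᵢ Aᵢₖ = 0`.
-/

open Matrix

namespace Matrix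

variable {ι κ R : Type*} [CommRing R]

theorem isSymm_of_forall_trace_mul_skew_eq_zero [Fintype ι] [DecidableEq ι] {M : Matrix ι ι R}
    (h : ∀ Z : Matrix ι ι R, Zᵀ = -Z → (M * Zᵀ).trace = 0) : M.IsSymm := by
  refine IsSymm.ext fun p q => ?_
  have hskew : (single q p (1 : R) - single p q 1)ᵀ = -(single q p 1 - single p q 1) := by
    rw [transpose_sub, transpose_single, transpose_single, neg_sub]
  have := h _ hskew
  rw [hskew, neg_sub, Matrix.mul_sub, trace_sub, trace_mul_single, trace_mul_single] at this
  simpa [sub_eq_zero] using this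

theorem isSymm_mul_transpose_of_isSymm_sub_mul_transpose [Fintype κ] {B A : Matrix ι κ R}
    (h : ((B - A) * Aᵀ).IsSymm) : (B * Aᵀ).IsSymm := by
  have hA : (A * Aᵀ).IsSymm := by rw [IsSymm, transpose_mul, transpose_transpose]
  simpa [Matrix.sub_mul] using h.add hA

section RectDiagonal

variable [DecidableEq κ]

/-- For `e = Fin.castLEEmb` this is the rectangular diagonal matrix with diagonal `d`. -/
def rectDiagonal (e : ι ↪ κ) (d : ι → R) : Matrix ι κ R :=
  of fun i j => if j = e i then d i else 0

variable (e : ι ↪ κ) (d : ι → R) (A : Matrix ι κ R)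

theorem rectDiagonal_mul_transpose_apply [Fintype κ] (p q : ι) :
    (rectDiagonal e d * Aᵀ) p q = d p * A q (e p) := by
  simp [rectDiagonal, mul_apply]

variable [Fintype ι]

theorem transpose_rectDiagonal_mul_apply_apply (i : ι) (l : κ) :
    ((rectDiagonal e d)ᵀ * A) (e i) l = d i * A i l := by
  classical
  simp [rectDiagonal, mul_apply, e.injective.eq_iff]

theorem transpose_rectDiagonal_mul_apply_of_notMem_range {j : κ} (hj : j ∉ Set.range e)
    (l : κ) : ((rectDiagonal e d)ᵀ * A) j l = 0 := by
  rw [mul_apply]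
  refine Finset.sum_eq_zero fun m _ => ?_
  rw [transpose_apply, rectDiagonal, of_apply, if_neg fun h => hj ⟨m, h.symm⟩, zero_mul]

variable [Fintype κ] [NoZeroDivisors R] {e d A}

theorem apply_eq_zero_of_isSymm_rectDiagonal (hd0 : ∀ i, d i ≠ 0)
    (hd2 : Function.Injective fun i => d i ^ 2)
    (h1 : (rectDiagonal e d * Aᵀ).IsSymm) (h2 : ((rectDiagonal e d)ᵀ * A).IsSymm)
    {i : ι} {j : κ} (hij : j ≠ e i) : A i j = 0 := by
  by_cases hj : j ∈ Set.range e
  · obtain ⟨k, rfl⟩ := hj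
    have hki : k ≠ i := fun h => hij (h ▸ rfl)
    have e1 : d i * A i (e k) = d k * A k (e i) := by
      simpa [transpose_rectDiagonal_mul_apply_apply] using h2.apply (e k) (e i)
    have e2 : d i * A k (e i) = d k * A i (e k) := by
      simpa [rectDiagonal_mul_transpose_apply] using h1.apply k i
    have key : (d i ^ 2 - d k ^ 2) * A i (e k) = 0 := by
      linear_combination d i * e1 + d k * e2
    exact (mul_eq_zero.mp key).resolve_left (sub_ne_zero.mpr fun h => hki (hd2 h).symm)
  · have := h2.apply j (e i)
    rw [transpose_rectDiagonal_mul_apply_apply,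
      transpose_rectDiagonal_mul_apply_of_notMem_range e d A hj] at this
    exact (mul_eq_zero.mp this).resolve_left (hd0 i)

end RectDiagonal

end Matrix

theorem stmt16_general {n t : ℕ} (hnt : n ≤ t)
    (D A : Matrix (Fin n) (Fin t) ℂ) (d : Fin n → ℂ)
    (hD : ∀ (i : Fin n) (j : Fin t), D i j = if (j : ℕ) = (i : ℕ) then d i else 0)
    (hd0 : ∀ i, d i ≠ 0) (hd2 : ∀ i j, d i ^ 2 = d j ^ 2 → i = j)
    (h1 : ∀ Z : Matrix (Fin n) (Fin n) ℂ, Zᵀ = -Z → ((D - A) * Aᵀ * Zᵀ).trace = 0)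
    (h2 : ∀ Z : Matrix (Fin t) (Fin t) ℂ, Zᵀ = -Z → ((D - A)ᵀ * A * Zᵀ).trace = 0) :
    ∀ (i : Fin n) (j : Fin t), (i : ℕ) ≠ (j : ℕ) → A i j = 0 := by
  have hD' : D = rectDiagonal (Fin.castLEEmb hnt) d := by
    ext i j
    simp [rectDiagonal, hD, Fin.ext_iff]
  have hDA : (D * Aᵀ).IsSymm := isSymm_mul_transpose_of_isSymm_sub_mul_transpose
    (isSymm_of_forall_trace_mul_skew_eq_zero h1)
  have hDtA : (Dᵀ * A).IsSymm := by
    have h2' := isSymm_of_forall_trace_mul_skew_eq_zero h2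
    rw [transpose_sub, ← transpose_transpose A] at h2'
    simpa using isSymm_mul_transpose_of_isSymm_sub_mul_transpose h2'
  subst hD'
  intro i j hij
  exact apply_eq_zero_of_isSymm_rectDiagonal hd0 hd2 hDA hDtA fun h => hij (by simp [h])

/-- Let `Y = U D Vᵀ` with `U ∈ O_ℂ(n)`, `V ∈ O_ℂ(t)` and `D ∈ ℂ^{n×t}` diagonal with nonzero
diagonal entries whose squares are pairwise distinct. If `A ∈ ℂ^{n×t}` satisfies
`trace((D - A) Aᵀ Zᵀ) = 0` for every skew-symmetric `Z ∈ ℂ^{n×n}` and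
`trace((D - A)ᵀ A Zᵀ) = 0` for every skew-symmetric `Z ∈ ℂ^{t×t}`, then `A` is diagonal. -/
theorem stmt16 {n t : ℕ} (hnt : n ≤ t)
    (U : Matrix (Fin n) (Fin n) ℂ) (V : Matrix (Fin t) (Fin t) ℂ)
    (Y D A : Matrix (Fin n) (Fin t) ℂ) (d : Fin n → ℂ)
    (hU : U * Uᵀ = 1) (hV : V * Vᵀ = 1) (hY : Y = U * D * Vᵀ)
    (hD : ∀ (i : Fin n) (j : Fin t), D i j = if (j : ℕ) = (i : ℕ) then d i else 0)
    (hd0 : ∀ i, d i ≠ 0) (hd2 : ∀ i j, d i ^ 2 = d j ^ 2 → i = j)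
    (h1 : ∀ Z : Matrix (Fin n) (Fin n) ℂ, Zᵀ = -Z → ((D - A) * Aᵀ * Zᵀ).trace = 0)
    (h2 : ∀ Z : Matrix (Fin t) (Fin t) ℂ, Zᵀ = -Z → ((D - A)ᵀ * A * Zᵀ).trace = 0) :
    ∀ (i : Fin n) (j : Fin t), (i : ℕ) ≠ (j : ℕ) → A i j = 0 :=
  stmt16_general hnt D A d hD hd0 hd2 h1 h2
end
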